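/- arXiv:2508.11908 — 3 statements merged into one kernel-verified Lean document; each statement's English description precedes it below -/
import Mathlib

section
/- There exists a constant $C > 0$ such that for all real $l \neq 0$, $\eta \in \mathbb{R}$, and $t \geq 0$: $\frac{|l| (|l| + |\eta|)}{l^2 + \eta^2} \leq C \langle t \rangle^{-1} \langle \tfrac{1}{l} \rangle^2 \langle l, \eta + lt \rangle^2$, where $\langle \tfrac{1}{l} \rangle = \sqrt{1 + 1/l^2}$, $\langle l, c \rangle = \sqrt{1 + l^2 + c^2}$, and $\langle t \rangle = \sqrt{1 + t^2}$. -/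
set_option maxHeartbeats 1000000


theorem stmt_10 :
    ∃ C : ℝ, 0 < C ∧ ∀ (l η t : ℝ), l ≠ 0 → 0 ≤ t →
      |l| * (|l| + |η|) / (l ^ 2 + η ^ 2) ≤
        C * (1 / Real.sqrt (1 + t ^ 2)) * (1 + 1 / l ^ 2) * (1 + l ^ 2 + (η + l * t) ^ 2) := by
  refine ⟨8, by norm_num, fun l η t hl ht => ?_⟩
  set s := Real.sqrt (1 + t ^ 2) with hs_def
  have hl2 : (0 : ℝ) < l ^ 2 := by positivity
  have hd : (0 : ℝ) < l ^ 2 + η ^ 2 := by positivity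
  have hs0 : (0 : ℝ) < s := Real.sqrt_pos.mpr (by positivity)
  have hssq : s ^ 2 = 1 + t ^ 2 := Real.sq_sqrt (by positivity)
  have hs1 : (1 : ℝ) ≤ s := by
    nlinarith [hssq, sq_nonneg t, hs0]
  have hsle : s ≤ 1 + t := by
    nlinarith [hssq, hs0, sq_nonneg t]
  have ha : (0 : ℝ) ≤ |l| := abs_nonneg l
  have hb : (0 : ℝ) ≤ |η| := abs_nonneg η
  have hal : |l| ^ 2 = l ^ 2 := sq_abs l
  have hbe : |η| ^ 2 = η ^ 2 := sq_abs η
  have hinv : (0 : ℝ) ≤ 1 / l ^ 2 := by positivity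
  have key : |l| * (|l| + |η|) * s ≤
      8 * (1 + 1 / l ^ 2) * (1 + l ^ 2 + (η + l * t) ^ 2) * (l ^ 2 + η ^ 2) := by
    rcases le_or_gt (|l| * t) (2 * |η|) with hcase | hcase
    · -- case A
      have h1 : (1 : ℝ) ≤ (1 + 1 / l ^ 2) * (1 + l ^ 2 + (η + l * t) ^ 2) := by
        nlinarith [sq_nonneg (η + l * t), sq_nonneg l, hinv,
          mul_nonneg hinv (add_nonneg (add_nonneg zero_le_one (sq_nonneg l)) (sq_nonneg (η + l * t)))]
      have hA : 8 * (l ^ 2 + η ^ 2) ≤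
          8 * (1 + 1 / l ^ 2) * (1 + l ^ 2 + (η + l * t) ^ 2) * (l ^ 2 + η ^ 2) := by
        nlinarith [mul_nonneg (sub_nonneg.mpr h1) hd.le]
      have hL : |l| * (|l| + |η|) * s ≤ |l| * (|l| + |η|) * (1 + t) :=
        mul_le_mul_of_nonneg_left hsle (by positivity)
      have hL2 : |l| * (|l| + |η|) * (1 + t) ≤ 8 * (l ^ 2 + η ^ 2) := by
        have h2 : |l| * t * (|l| + |η|) ≤ 2 * |η| * (|l| + |η|) :=
          mul_le_mul_of_nonneg_right hcase (by positivity)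
        nlinarith [sq_nonneg (|l| - |η|), hal, hbe]
      linarith
    · -- case B
      have habs : |l| * t ≤ |η + l * t| + |η| := by
        have h := abs_add_le (η + l * t) (-η)
        have h2 : |(η + l * t) + -η| = |l| * t := by
          rw [show (η + l * t) + -η = l * t by ring, abs_mul, abs_of_nonneg ht]
        rw [h2] at h
        simpa using h
      have hnn : (0 : ℝ) ≤ |l| * t - |η| := by nlinarith
      have hsq2 : (|l| * t - |η|) ^ 2 ≤ (η + l * t) ^ 2 := by
        have h3 : |l| * t - |η| ≤ |η + l * t| := by linarith
        calc (|l| * t - |η|) ^ 2 ≤ |η + l * t| ^ 2 := by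
              exact pow_le_pow_left₀ hnn h3 2
          _ = (η + l * t) ^ 2 := sq_abs _
      have hXl : l ^ 2 * t ^ 2 / 4 ≤ (η + l * t) ^ 2 := by
        nlinarith [hsq2, hcase, hal, hbe, hnn]
      have hEq : 1 / l ^ 2 * (l ^ 2 * t ^ 2 / 4) = t ^ 2 / 4 := by
        field_simp
      have hXdiv : t ^ 2 / 4 ≤ 1 / l ^ 2 * (η + l * t) ^ 2 := by
        have h4 := mul_le_mul_of_nonneg_left hXl hinv
        rwa [hEq] at h4
      have hP : s / 4 ≤ (1 + 1 / l ^ 2) * (1 + l ^ 2 + (η + l * t) ^ 2) := by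
        have hinvone : 1 / l ^ 2 * l ^ 2 = 1 := by field_simp
        have hexp : (1 + 1 / l ^ 2) * (1 + l ^ 2 + (η + l * t) ^ 2) =
            2 + l ^ 2 + (η + l * t) ^ 2 + 1 / l ^ 2 + 1 / l ^ 2 * (η + l * t) ^ 2 := by
          have : (1 + 1 / l ^ 2) * (1 + l ^ 2 + (η + l * t) ^ 2) =
              1 + l ^ 2 + (η + l * t) ^ 2 + 1 / l ^ 2 + 1 / l ^ 2 * l ^ 2 +
                1 / l ^ 2 * (η + l * t) ^ 2 := by ring
          rw [this, hinvone]; ring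
        have hss : s ≤ 1 + t ^ 2 := by nlinarith [mul_nonneg (sub_nonneg.mpr hs1) hs0.le]
        rw [hexp]
        nlinarith [hXdiv, sq_nonneg (η + l * t), sq_nonneg l, hinv]
      have hL : |l| * (|l| + |η|) ≤ 2 * (l ^ 2 + η ^ 2) := by
        nlinarith [sq_nonneg (|l| - |η|), hal, hbe]
      calc |l| * (|l| + |η|) * s ≤ 2 * (l ^ 2 + η ^ 2) * s :=
            mul_le_mul_of_nonneg_right hL hs0.le
        _ ≤ 2 * (l ^ 2 + η ^ 2) * (4 * ((1 + 1 / l ^ 2) * (1 + l ^ 2 + (η + l * t) ^ 2))) := by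
            have : s ≤ 4 * ((1 + 1 / l ^ 2) * (1 + l ^ 2 + (η + l * t) ^ 2)) := by linarith
            exact mul_le_mul_of_nonneg_left this (by positivity)
        _ = 8 * (1 + 1 / l ^ 2) * (1 + l ^ 2 + (η + l * t) ^ 2) * (l ^ 2 + η ^ 2) := by ring
  rw [div_le_iff₀ hd]
  have h2 : 8 * (1 / s) * (1 + 1 / l ^ 2) * (1 + l ^ 2 + (η + l * t) ^ 2) * (l ^ 2 + η ^ 2) =
      8 * (1 + 1 / l ^ 2) * (1 + l ^ 2 + (η + l * t) ^ 2) * (l ^ 2 + η ^ 2) / s := by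
    field_simp
  rw [h2, le_div_iff₀ hs0]
  linarith
end

section
/- There exists a constant $C > 0$ such that for all real $l \neq 0$, $\eta \in \mathbb{R}$, and $t \geq 0$: $\frac{|l|}{l^2 + \eta^2} \leq C \langle t \rangle^{-2} \langle \tfrac{1}{l} \rangle^3 \langle l, \eta + lt \rangle^2$, where $\langle \tfrac{1}{l} \rangle = \sqrt{1 + 1/l^2}$, $\langle l, c \rangle = \sqrt{1 + l^2 + c^2}$, and $\langle t \rangle = \sqrt{1 + t^2}$. -/
theorem stmt_11 :
    ∃ C : ℝ, 0 < C ∧ ∀ (l η t : ℝ), l ≠ 0 → 0 ≤ t →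
      |l| / (l ^ 2 + η ^ 2) ≤
        C * (1 / (1 + t ^ 2)) * Real.sqrt (1 + 1 / l ^ 2) ^ 3 *
          (1 + l ^ 2 + (η + l * t) ^ 2) := by
  refine ⟨3, by norm_num, fun l η t hl ht => ?_⟩
  have hl2 : (0:ℝ) < l ^ 2 := by positivity
  have ha : (0:ℝ) < |l| := abs_pos.mpr hl
  set s := Real.sqrt (1 + 1 / l ^ 2) with hs
  have hx : (0:ℝ) ≤ 1 + 1 / l ^ 2 := by positivity
  have hs2 : s ^ 2 = 1 + 1 / l ^ 2 := Real.sq_sqrt hx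
  have hs1 : (1:ℝ) ≤ s := by
    have h : Real.sqrt 1 ≤ Real.sqrt (1 + 1 / l ^ 2) :=
      Real.sqrt_le_sqrt (le_add_of_nonneg_right (by positivity : (0:ℝ) ≤ 1 / l ^ 2))
    simpa [hs] using h
  have has : (1:ℝ) ≤ |l| * s := by
    have h1 : |l| * s = Real.sqrt (l ^ 2) * Real.sqrt (1 + 1 / l ^ 2) := by
      rw [Real.sqrt_sq_eq_abs]
    have h2 : |l| * s = Real.sqrt (l ^ 2 * (1 + 1 / l ^ 2)) := by
      rw [h1, ← Real.sqrt_mul hl2.le]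
    have h3 : l ^ 2 * (1 + 1 / l ^ 2) = l ^ 2 + 1 := by
      field_simp
    rw [h2, h3]
    have : (1:ℝ) = Real.sqrt 1 := by simp
    rw [this]
    exact Real.sqrt_le_sqrt (by nlinarith)
  have hsnn : (0:ℝ) ≤ s := Real.sqrt_nonneg _
  have haw : (1:ℝ) ≤ |l| * s ^ 3 := by nlinarith
  have haw3 : (1:ℝ) ≤ |l| ^ 3 * s ^ 3 := by
    have hx1 : (0:ℝ) ≤ (|l| * s - 1) * (|l| * s) := by
      apply mul_nonneg (by linarith) (by positivity)
    have hx2 : (0:ℝ) ≤ (|l| * s - 1) * ((|l| * s) * (|l| * s)) := by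
      apply mul_nonneg (by linarith) (by positivity)
    nlinarith [hx1, hx2]
  have hal : |l| ^ 2 = l ^ 2 := sq_abs l
  have h4 : l ^ 2 * t ^ 2 ≤ 2 * (η + l * t) ^ 2 + 2 * η ^ 2 := by
    nlinarith [sq_nonneg ((η + l * t) + η)]
  have key : |l| * (1 + t ^ 2) ≤
      3 * s ^ 3 * (1 + l ^ 2 + (η + l * t) ^ 2) * (l ^ 2 + η ^ 2) := by
    set u := η + l * t
    set a := |l|
    set w := s ^ 3
    have hw0 : (0:ℝ) ≤ w := by positivity
    -- suffices to show a * (a + a*t^2) ≤ a * (w*(3+2u^2)*(a^2+η^2)) then conclude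
    have main : a * (1 + t ^ 2) ≤ w * (3 + 2 * u ^ 2) * (a ^ 2 + η ^ 2) := by
      have h5 : a ^ 2 * t ^ 2 ≤ 2 * u ^ 2 + 2 * η ^ 2 := by rw [hal]; exact h4
      have hmul : a * (a * (1 + t ^ 2)) ≤ a * (w * (3 + 2 * u ^ 2) * (a ^ 2 + η ^ 2)) := by
        have e1 : (0:ℝ) ≤ (a * w - 1) * a ^ 2 := by nlinarith
        have e2 : (0:ℝ) ≤ (a * w - 1) * η ^ 2 := by nlinarith
        have e3 : (0:ℝ) ≤ (a ^ 3 * w - 1) * u ^ 2 := by nlinarith [sq_nonneg u]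
        have e4 : (0:ℝ) ≤ (a * w - 1) * (u ^ 2 * η ^ 2) :=
          mul_nonneg (by linarith) (by positivity)
        nlinarith [e1, e2, e3, e4]
      exact le_of_mul_le_mul_left hmul ha
    have triv : w * (3 + 2 * u ^ 2) * (a ^ 2 + η ^ 2) ≤
        3 * w * (1 + a ^ 2 + u ^ 2) * (a ^ 2 + η ^ 2) := by
      have hdiff : 3 * w * (1 + a ^ 2 + u ^ 2) * (a ^ 2 + η ^ 2)
          - w * (3 + 2 * u ^ 2) * (a ^ 2 + η ^ 2)
          = w * (3 * a ^ 2 + u ^ 2) * (a ^ 2 + η ^ 2) := by ring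
      have hnn : (0:ℝ) ≤ w * (3 * a ^ 2 + u ^ 2) * (a ^ 2 + η ^ 2) := by positivity
      linarith
    have := main.trans triv
    calc a * (1 + t ^ 2) ≤ 3 * w * (1 + a ^ 2 + u ^ 2) * (a ^ 2 + η ^ 2) := this
      _ = 3 * w * (1 + l ^ 2 + u ^ 2) * (l ^ 2 + η ^ 2) := by rw [hal]
  have hd : (0:ℝ) < l ^ 2 + η ^ 2 := by positivity
  have ht2 : (0:ℝ) < 1 + t ^ 2 := by positivity
  rw [div_le_iff₀ hd]
  have : 3 * (1 / (1 + t ^ 2)) * s ^ 3 * (1 + l ^ 2 + (η + l * t) ^ 2) * (l ^ 2 + η ^ 2)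
      = (3 * s ^ 3 * (1 + l ^ 2 + (η + l * t) ^ 2) * (l ^ 2 + η ^ 2)) / (1 + t ^ 2) := by
    ring
  rw [this, le_div_iff₀ ht2]
  linarith [key]
end

section
/- There exists a constant $C > 0$ such that for all real $l \neq 0$, $\eta \in \mathbb{R}$, and $t \geq 0$: $\frac{|\eta|}{l^2 + \eta^2} \leq C \langle t \rangle^{-1} \langle \tfrac{1}{l} \rangle^2 \langle l, \eta + lt \rangle$, where $\langle \tfrac{1}{l} \rangle = \sqrt{1 + 1/l^2}$, $\langle l, c \rangle = \sqrt{1 + l^2 + c^2}$, and $\langle t \rangle = \sqrt{1+t^2}$. -/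
theorem stmt_12 :
    ∃ C : ℝ, 0 < C ∧ ∀ (l η t : ℝ), l ≠ 0 → 0 ≤ t →
      |η| / (l ^ 2 + η ^ 2) ≤
        C * (1 / Real.sqrt (1 + t ^ 2)) * (1 + 1 / l ^ 2) *
          Real.sqrt (1 + l ^ 2 + (η + l * t) ^ 2) := by
  refine ⟨2, by norm_num, ?_⟩
  intro l η t hl ht
  have hl2 : (0:ℝ) < l ^ 2 := by positivity
  have hl4 : (0:ℝ) < l ^ 4 := by positivity
  have hden : (0:ℝ) < l ^ 2 + η ^ 2 := by positivity
  have hstpos : (0:ℝ) < Real.sqrt (1 + t ^ 2) := Real.sqrt_pos.2 (by positivity)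
  set X := η + l * t with hX
  -- polynomial inequality
  have hA : l ^ 2 * (1 + t ^ 2) ≤ 2 * (1 + l ^ 2) * (1 + η ^ 2) * (1 + X ^ 2) := by
    have h1 : (l * t) ^ 2 = (X - η) ^ 2 := by rw [hX]; ring
    nlinarith [sq_nonneg (X + η), sq_nonneg (X - η), sq_nonneg X, sq_nonneg η,
      sq_nonneg l, mul_nonneg (sq_nonneg l) (sq_nonneg X), mul_nonneg (sq_nonneg l) (sq_nonneg η),
      mul_nonneg (mul_nonneg (sq_nonneg l) (sq_nonneg η)) (sq_nonneg X),
      mul_nonneg (sq_nonneg η) (sq_nonneg X)]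
  have hB : η ^ 2 * (1 + η ^ 2) * l ^ 2 ≤ 2 * (1 + l ^ 2) * (l ^ 2 + η ^ 2) ^ 2 := by
    nlinarith [mul_nonneg (sq_nonneg l) (sq_nonneg η), sq_nonneg (l * η),
      mul_nonneg (mul_nonneg (sq_nonneg l) (sq_nonneg η)) (sq_nonneg η),
      mul_nonneg (sq_nonneg (l*l)) (sq_nonneg η), sq_nonneg (l^2 + η^2), sq_nonneg l]
  have hP : η ^ 2 * (1 + t ^ 2) * l ^ 4 ≤
      (2 * (1 + l ^ 2) * (l ^ 2 + η ^ 2)) ^ 2 * (1 + l ^ 2 + X ^ 2) := by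
    calc η ^ 2 * (1 + t ^ 2) * l ^ 4 = (η ^ 2 * l ^ 2) * (l ^ 2 * (1 + t ^ 2)) := by ring
      _ ≤ (η ^ 2 * l ^ 2) * (2 * (1 + l ^ 2) * (1 + η ^ 2) * (1 + X ^ 2)) :=
          mul_le_mul_of_nonneg_left hA (by positivity)
      _ = (2 * (1 + l ^ 2) * (1 + X ^ 2)) * (η ^ 2 * (1 + η ^ 2) * l ^ 2) := by ring
      _ ≤ (2 * (1 + l ^ 2) * (1 + X ^ 2)) * (2 * (1 + l ^ 2) * (l ^ 2 + η ^ 2) ^ 2) :=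
          mul_le_mul_of_nonneg_left hB (by positivity)
      _ = (2 * (1 + l ^ 2) * (l ^ 2 + η ^ 2)) ^ 2 * (1 + X ^ 2) := by ring
      _ ≤ (2 * (1 + l ^ 2) * (l ^ 2 + η ^ 2)) ^ 2 * (1 + l ^ 2 + X ^ 2) := by
          apply mul_le_mul_of_nonneg_left _ (by positivity)
          nlinarith [sq_nonneg l]
  -- key inequality with sqrt
  have key : |η| * Real.sqrt (1 + t ^ 2) ≤
      2 * (1 + 1 / l ^ 2) * Real.sqrt (1 + l ^ 2 + X ^ 2) * (l ^ 2 + η ^ 2) := by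
    have h1 : |η| * Real.sqrt (1 + t ^ 2) = Real.sqrt (η ^ 2 * (1 + t ^ 2)) := by
      rw [Real.sqrt_mul (sq_nonneg η), Real.sqrt_sq_eq_abs]
    have h2 : 2 * (1 + 1 / l ^ 2) * Real.sqrt (1 + l ^ 2 + X ^ 2) * (l ^ 2 + η ^ 2)
        = Real.sqrt ((2 * (1 + 1 / l ^ 2) * (l ^ 2 + η ^ 2)) ^ 2 * (1 + l ^ 2 + X ^ 2)) := by
      rw [Real.sqrt_mul (by positivity), Real.sqrt_sq (by positivity)]
      ring
    rw [h1, h2]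
    apply Real.sqrt_le_sqrt
    have hrw : (2 * (1 + 1 / l ^ 2) * (l ^ 2 + η ^ 2)) ^ 2 * (1 + l ^ 2 + X ^ 2)
        = ((2 * (1 + l ^ 2) * (l ^ 2 + η ^ 2)) ^ 2 * (1 + l ^ 2 + X ^ 2)) / l ^ 4 := by
      field_simp
      ring
    rw [hrw, le_div_iff₀ hl4]
    linarith [hP]
  rw [div_le_iff₀ hden]
  have hrw2 : 2 * (1 / Real.sqrt (1 + t ^ 2)) * (1 + 1 / l ^ 2) *
      Real.sqrt (1 + l ^ 2 + (η + l * t) ^ 2) * (l ^ 2 + η ^ 2)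
      = (2 * (1 + 1 / l ^ 2) * Real.sqrt (1 + l ^ 2 + X ^ 2) * (l ^ 2 + η ^ 2)) /
        Real.sqrt (1 + t ^ 2) := by
    rw [hX]; ring
  rw [hrw2, le_div_iff₀ hstpos]
  exact key
end
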